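/- arXiv:1601.04755 — 2 statements merged into one kernel-verified Lean document; each statement's English description precedes it below -/
import Mathlib

section
/- Let H be a finite set of non-vertical planes in ℝ³ in general position, let k ≥ 0, and let p, q, r be three collinear points in the xy-plane with q on the segment pr. Let p', q', r' be the liftings of p, q, r to the k-level of the arrangement of H, and let q'' be the point on segment p'r' co-vertical with q. Then cr(q'', q') ≤ (1/2)·cr(p', r') + 8.5, where cr denotes the crossing distance with respect to H. -/
open scoped Classical

/-- A non-vertical plane in `ℝ³`, represented by coefficients `(a, b, c)`:
the graph `z = a·x + b·y + c`. -/
abbrev GPlane := ℝ × ℝ × ℝ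

/-- The set of points of the plane `h`. -/
def gpset (h : GPlane) : Set (Fin 3 → ℝ) :=
  {x | x 2 = h.1 * x 0 + h.2.1 * x 1 + h.2.2}

/-- The plane `h` lies strictly (vertically) below the point `z`. -/
def IsBelow (h : GPlane) (z : Fin 3 → ℝ) : Prop :=
  h.1 * z 0 + h.2.1 * z 1 + h.2.2 < z 2

/-- The level of a point `z`: the number of planes of `H` strictly below `z`. -/
noncomputable def levelOf (H : Finset GPlane) (z : Fin 3 → ℝ) : ℕ :=
  (H.filter (fun h => IsBelow h z)).card

/-- The `k`-level of the arrangement of `H`: the closure of the set of points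
lying on some plane of `H` at level exactly `k`. -/
noncomputable def kLevel (H : Finset GPlane) (k : ℕ) : Set (Fin 3 → ℝ) :=
  closure {z | (∃ h ∈ H, z ∈ gpset h) ∧ levelOf H z = k}

/-- The crossing distance: the number of planes of `H` meeting the closed
segment `[p, q]`. -/
noncomputable def crDist (H : Finset GPlane) (p q : Fin 3 → ℝ) : ℕ :=
  (H.filter (fun h => (gpset h ∩ segment ℝ p q).Nonempty)).card

/-- The `xy`-projection of a point of `ℝ³`. -/
def proj2 (z : Fin 3 → ℝ) : Fin 2 → ℝ := ![z 0, z 1]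

/-- General position: no two planes are parallel, no three planes share a
common line, and no four planes share a common point. -/
def GenPos (H : Finset GPlane) : Prop :=
  (∀ h₁ ∈ H, ∀ h₂ ∈ H, h₁ ≠ h₂ → (h₁.1, h₁.2.1) ≠ (h₂.1, h₂.2.1)) ∧
  (∀ h₁ ∈ H, ∀ h₂ ∈ H, ∀ h₃ ∈ H, h₁ ≠ h₂ → h₂ ≠ h₃ → h₁ ≠ h₃ →
    ∀ x y : Fin 3 → ℝ,
      x ∈ gpset h₁ ∩ gpset h₂ ∩ gpset h₃ →
      y ∈ gpset h₁ ∩ gpset h₂ ∩ gpset h₃ → x = y) ∧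
  (∀ h₁ ∈ H, ∀ h₂ ∈ H, ∀ h₃ ∈ H, ∀ h₄ ∈ H,
    h₁ ≠ h₂ → h₁ ≠ h₃ → h₁ ≠ h₄ → h₂ ≠ h₃ → h₂ ≠ h₄ → h₃ ≠ h₄ →
    ¬ ∃ x : Fin 3 → ℝ,
      x ∈ gpset h₁ ∩ gpset h₂ ∩ gpset h₃ ∩ gpset h₄)

def fval (h : GPlane) (z : Fin 3 → ℝ) : ℝ := h.1 * z 0 + h.2.1 * z 1 + h.2.2

lemma isBelow_iff (h : GPlane) (z : Fin 3 → ℝ) : IsBelow h z ↔ fval h z < z 2 := Iff.rfl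
lemma gpset_iff (h : GPlane) (z : Fin 3 → ℝ) : z ∈ gpset h ↔ z 2 = fval h z := Iff.rfl

lemma comb_apply (a b : ℝ) (x y : Fin 3 → ℝ) (i : Fin 3) :
    (a • x + b • y) i = a * x i + b * y i := by
  simp [Pi.add_apply, Pi.smul_apply, smul_eq_mul]

lemma fval_comb (h : GPlane) (a b : ℝ) (hab : a + b = 1) (x y : Fin 3 → ℝ) :
    (a • x + b • y) 2 - fval h (a • x + b • y)
      = a * (x 2 - fval h x) + b * (y 2 - fval h y) := by
  simp only [fval, comb_apply]
  have hb : b = 1 - a := by linarith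
  subst hb; ring

lemma exists_on_segment (h : GPlane) (x y : Fin 3 → ℝ)
    (hx : fval h x ≤ x 2) (hy : y 2 ≤ fval h y) :
    ∃ z ∈ segment ℝ x y, z ∈ gpset h := by
  set gx := x 2 - fval h x with hgx
  set gy := y 2 - fval h y with hgy
  have hgx0 : 0 ≤ gx := by simp [hgx]; linarith
  have hgy0 : gy ≤ 0 := by simp [hgy]; linarith
  by_cases hd : gx - gy = 0
  · refine ⟨x, left_mem_segment ℝ x y, ?_⟩
    rw [gpset_iff]
    have : gx = 0 := by linarith
    simp [hgx] at this; linarith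
  · have hdpos : 0 < gx - gy := lt_of_le_of_ne (by linarith) (Ne.symm hd)
    set t := gx / (gx - gy) with ht
    have ht0 : 0 ≤ t := div_nonneg hgx0 (le_of_lt hdpos)
    have ht1 : t ≤ 1 := by
      rw [ht, div_le_one hdpos]; linarith
    refine ⟨(1 - t) • x + t • y, ⟨1 - t, t, by linarith, ht0, by ring, rfl⟩, ?_⟩
    rw [gpset_iff]
    have hcomb := fval_comb h (1 - t) t (by ring) x y
    have : (1 - t) * gx + t * gy = 0 := by
      rw [ht]; field_simp; ring
    rw [← hgx, ← hgy] at hcomb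
    linarith [hcomb]

lemma on_card_le_three (H : Finset GPlane) (hgp : GenPos H) (x : Fin 3 → ℝ) :
    (H.filter (fun h => x ∈ gpset h)).card ≤ 3 := by
  by_contra hc
  push_neg at hc
  set s := H.filter (fun h => x ∈ gpset h) with hs
  have h4 : 4 ≤ s.card := hc
  obtain ⟨a, ha⟩ := Finset.card_pos.mp (by omega : 0 < s.card)
  have h3 : 3 ≤ (s.erase a).card := by
    have := Finset.card_erase_of_mem ha; omega
  obtain ⟨b, hb⟩ := Finset.card_pos.mp (by omega : 0 < (s.erase a).card)
  have h2 : 2 ≤ ((s.erase a).erase b).card := by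
    have := Finset.card_erase_of_mem hb; omega
  obtain ⟨c, hcc⟩ := Finset.card_pos.mp (by omega : 0 < ((s.erase a).erase b).card)
  have h1 : 1 ≤ (((s.erase a).erase b).erase c).card := by
    have := Finset.card_erase_of_mem hcc; omega
  obtain ⟨d, hd⟩ := Finset.card_pos.mp (by omega : 0 < (((s.erase a).erase b).erase c).card)
  have hdc : d ≠ c := (Finset.mem_erase.mp hd).1
  have hd' := (Finset.mem_erase.mp hd).2
  have hdb : d ≠ b := (Finset.mem_erase.mp hd').1
  have hd'' := (Finset.mem_erase.mp hd').2
  have hda : d ≠ a := (Finset.mem_erase.mp hd'').1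
  have hds : d ∈ s := (Finset.mem_erase.mp hd'').2
  have hcb : c ≠ b := (Finset.mem_erase.mp hcc).1
  have hc' := (Finset.mem_erase.mp hcc).2
  have hca : c ≠ a := (Finset.mem_erase.mp hc').1
  have hcs : c ∈ s := (Finset.mem_erase.mp hc').2
  have hba : b ≠ a := (Finset.mem_erase.mp hb).1
  have hbs : b ∈ s := (Finset.mem_erase.mp hb).2
  have hmem : ∀ e ∈ s, e ∈ H ∧ x ∈ gpset e := fun e he => by
    have := Finset.mem_filter.mp he; exact ⟨this.1, this.2⟩
  obtain ⟨haH, hax⟩ := hmem a ha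
  obtain ⟨hbH, hbx⟩ := hmem b hbs
  obtain ⟨hcH, hcx⟩ := hmem c hcs
  obtain ⟨hdH, hdx⟩ := hmem d hds
  exact hgp.2.2 a haH b hbH c hcH d hdH hba.symm hca.symm hda.symm hcb.symm hdb.symm hdc.symm
    ⟨x, ⟨⟨⟨hax, hbx⟩, hcx⟩, hdx⟩⟩

lemma isOpen_isBelow (h : GPlane) : IsOpen {z : Fin 3 → ℝ | IsBelow h z} := by
  have : IsOpen {z : Fin 3 → ℝ | fval h z < z 2} :=
    isOpen_lt (by unfold fval; fun_prop) (continuous_apply 2)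
  exact this

lemma isOpen_isAbove (h : GPlane) : IsOpen {z : Fin 3 → ℝ | z 2 < fval h z} :=
  isOpen_lt (continuous_apply 2) (by unfold fval; fun_prop)

lemma level_bounds (H : Finset GPlane) (k : ℕ) (x : Fin 3 → ℝ)
    (hx : x ∈ kLevel H k) :
    levelOf H x ≤ k ∧ k ≤ levelOf H x + (H.filter (fun h => x ∈ gpset h)).card := by
  set B := H.filter (fun h => IsBelow h x) with hB
  set A := H.filter (fun h => x 2 < fval h x) with hA
  set U : Set (Fin 3 → ℝ) :=
    (⋂ h ∈ B, {z | IsBelow h z}) ∩ (⋂ h ∈ A, {z | z 2 < fval h z}) with hU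
  have hUopen : IsOpen U := by
    apply IsOpen.inter
    · exact isOpen_biInter_finset (fun h _ => isOpen_isBelow h)
    · exact isOpen_biInter_finset (fun h _ => isOpen_isAbove h)
  have hxU : x ∈ U := by
    constructor
    · simp only [Set.mem_iInter]
      intro h hh
      exact (Finset.mem_filter.mp hh).2
    · simp only [Set.mem_iInter]
      intro h hh
      exact (Finset.mem_filter.mp hh).2
  obtain ⟨z, hzU, hzS⟩ := _root_.mem_closure_iff.mp hx U hUopen hxU
  have hlevz : levelOf H z = k := hzS.2
  constructor
  · -- B ⊆ filter below z
    have hsub : B ⊆ H.filter (fun h => IsBelow h z) := by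
      intro h hh
      refine Finset.mem_filter.mpr ⟨(Finset.mem_filter.mp hh).1, ?_⟩
      have := Set.mem_iInter.mp (Set.mem_iInter.mp hzU.1 h)
      exact this hh
    calc levelOf H x = B.card := rfl
      _ ≤ _ := Finset.card_le_card hsub
      _ = k := hlevz
  · have hsub : H.filter (fun h => IsBelow h z) ⊆ H.filter (fun h => fval h x ≤ x 2) := by
      intro h hh
      obtain ⟨hhH, hhb⟩ := Finset.mem_filter.mp hh
      refine Finset.mem_filter.mpr ⟨hhH, ?_⟩
      by_contra hcon
      push_neg at hcon
      have hhA : h ∈ A := Finset.mem_filter.mpr ⟨hhH, hcon⟩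
      have := Set.mem_iInter.mp (Set.mem_iInter.mp hzU.2 h) hhA
      rw [isBelow_iff] at hhb
      exact absurd hhb (not_lt.mpr (le_of_lt this))
    have hk : k ≤ (H.filter (fun h => fval h x ≤ x 2)).card := by
      rw [← hlevz]; exact Finset.card_le_card hsub
    have hsplit : H.filter (fun h => fval h x ≤ x 2) ⊆
        H.filter (fun h => IsBelow h x) ∪ H.filter (fun h => x ∈ gpset h) := by
      intro h hh
      obtain ⟨hhH, hhle⟩ := Finset.mem_filter.mp hh
      rcases lt_or_eq_of_le hhle with hlt | heq
      · exact Finset.mem_union_left _ (Finset.mem_filter.mpr ⟨hhH, hlt⟩)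
      · exact Finset.mem_union_right _ (Finset.mem_filter.mpr ⟨hhH, heq.symm⟩)
    calc k ≤ _ := hk
      _ ≤ _ := Finset.card_le_card hsplit
      _ ≤ _ := Finset.card_union_le _ _

lemma crDist_symm (H : Finset GPlane) (x y : Fin 3 → ℝ) :
    crDist H x y = crDist H y x := by
  unfold crDist
  congr 1
  apply Finset.filter_congr
  intro h _
  rw [segment_symm]

lemma vertical_cr (H : Finset GPlane) (x y : Fin 3 → ℝ)
    (h0 : x 0 = y 0) (h1 : x 1 = y 1) (h2 : x 2 ≤ y 2) :
    crDist H x y + levelOf H x ≤ levelOf H y + (H.filter (fun h => y ∈ gpset h)).card := by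
  have hfeq : ∀ h : GPlane, fval h x = fval h y := by
    intro h; unfold fval; rw [h0, h1]
  have hsubB : H.filter (fun h => IsBelow h x) ⊆ H.filter (fun h => IsBelow h y) := by
    intro h hh
    obtain ⟨hhH, hhb⟩ := Finset.mem_filter.mp hh
    refine Finset.mem_filter.mpr ⟨hhH, ?_⟩
    rw [isBelow_iff] at hhb ⊢
    rw [← hfeq]; linarith
  have hcr : H.filter (fun h => (gpset h ∩ segment ℝ x y).Nonempty) ⊆
      (H.filter (fun h => IsBelow h y) \ H.filter (fun h => IsBelow h x)) ∪
        H.filter (fun h => y ∈ gpset h) := by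
    intro h hh
    obtain ⟨hhH, z, hzg, hzs⟩ := Finset.mem_filter.mp hh
    obtain ⟨a, b, ha, hb, hab, hz⟩ := hzs
    have hb1 : b = 1 - a := by linarith
    have hz0 : z 0 = x 0 := by rw [← hz, comb_apply, ← h0, hb1]; ring
    have hz1 : z 1 = x 1 := by rw [← hz, comb_apply, ← h1, hb1]; ring
    have ha1 : a = 1 - b := by linarith
    have hz2l : x 2 ≤ z 2 := by
      rw [← hz, comb_apply, ha1]; nlinarith [mul_nonneg hb (sub_nonneg.mpr h2)]
    have hz2u : z 2 ≤ y 2 := by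
      rw [← hz, comb_apply, hb1]; nlinarith [mul_nonneg ha (sub_nonneg.mpr h2)]
    have hfz : fval h z = fval h x := by unfold fval; rw [hz0, hz1]
    rw [gpset_iff, hfz] at hzg
    -- x 2 ≤ fval h x ≤ y 2  (since z2 = fval h x)
    rcases lt_or_eq_of_le (show fval h y ≤ y 2 by rw [← hfeq]; linarith) with hlt | heq
    · apply Finset.mem_union_left
      refine Finset.mem_sdiff.mpr ⟨Finset.mem_filter.mpr ⟨hhH, hlt⟩, ?_⟩
      intro hcon
      have := (Finset.mem_filter.mp hcon).2
      rw [isBelow_iff] at this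
      linarith
    · exact Finset.mem_union_right _ (Finset.mem_filter.mpr ⟨hhH, heq.symm⟩)
  calc crDist H x y + levelOf H x
      ≤ ((H.filter (fun h => IsBelow h y) \ H.filter (fun h => IsBelow h x)) ∪
          H.filter (fun h => y ∈ gpset h)).card + levelOf H x := by
        exact Nat.add_le_add_right (Finset.card_le_card hcr) _
    _ ≤ ((H.filter (fun h => IsBelow h y) \ H.filter (fun h => IsBelow h x)).card +
          (H.filter (fun h => y ∈ gpset h)).card) + levelOf H x :=
        Nat.add_le_add_right (Finset.card_union_le _ _) _
    _ ≤ levelOf H y + (H.filter (fun h => y ∈ gpset h)).card := by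
        have := Finset.card_sdiff_add_card_eq_card hsubB
        unfold levelOf
        omega

lemma comb_pos {a b u v : ℝ} (ha : 0 ≤ a) (hb : 0 ≤ b) (hab : a + b = 1)
    (hu : 0 < u) (hv : 0 < v) : 0 < a * u + b * v := by
  by_cases ha0 : a = 0
  · have : b = 1 := by linarith
    simp [ha0, this]; linarith
  · have hapos : 0 < a := lt_of_le_of_ne ha (Ne.symm ha0)
    have h1 : 0 < a * u := mul_pos hapos hu
    have h2 : 0 ≤ b * v := mul_nonneg hb hv.le
    linarith

lemma comb_nonpos {a b u v : ℝ} (ha : 0 ≤ a) (hb : 0 ≤ b)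
    (hu : u ≤ 0) (hv : v ≤ 0) : a * u + b * v ≤ 0 := by
  have h1 := mul_nonneg ha (neg_nonneg.mpr hu)
  have h2 := mul_nonneg hb (neg_nonneg.mpr hv)
  nlinarith

lemma filter_split (s : Finset GPlane) (P Q : GPlane → Prop) :
    (s.filter (fun h => P h ∧ Q h)).card + (s.filter (fun h => P h ∧ ¬ Q h)).card
      = (s.filter P).card := by
  rw [← Finset.card_union_of_disjoint]
  · congr 1
    ext h
    simp only [Finset.mem_union, Finset.mem_filter]
    tauto
  · rw [Finset.disjoint_left]
    intro h h1 h2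
    simp only [Finset.mem_filter] at h1 h2
    tauto


/-- For three collinear points `p, q, r` in the `xy`-plane with
`q ∈ pr`, lifting them to the `k`-level as `p', q', r'`, and letting `q''` be
the point of the segment `p'r'` co-vertical with `q`, one has
`cr(q'', q') ≤ cr(p', r')/2 + 8.5`. -/
theorem lift_middle_crossing
    (H : Finset GPlane) (hgp : GenPos H) (k : ℕ)
    (p q r : Fin 2 → ℝ) (hq : q ∈ segment ℝ p r)
    (p' q' r' q'' : Fin 3 → ℝ)
    (hp' : p' ∈ kLevel H k ∧ proj2 p' = p)
    (hq' : q' ∈ kLevel H k ∧ proj2 q' = q)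
    (hr' : r' ∈ kLevel H k ∧ proj2 r' = r)
    (hq'' : q'' ∈ segment ℝ p' r' ∧ proj2 q'' = q) :
    (crDist H q'' q' : ℝ) ≤ (crDist H p' r' : ℝ) / 2 + 8.5 := by
  -- coordinates
  have hproj : proj2 q'' = proj2 q' := hq''.2.trans hq'.2.symm
  have e0 : q'' 0 = q' 0 := by
    have := congrFun hproj 0
    simpa [proj2] using this
  have e1 : q'' 1 = q' 1 := by
    have := congrFun hproj 1
    simpa [proj2] using this
  -- level bounds at p', q', r'
  have hE : ∀ x : Fin 3 → ℝ, (H.filter (fun h => x ∈ gpset h)).card ≤ 3 :=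
    on_card_le_three H hgp
  obtain ⟨hLp1, hLp2⟩ := level_bounds H k p' hp'.1
  obtain ⟨hLq1, hLq2⟩ := level_bounds H k q' hq'.1
  obtain ⟨hLr1, hLr2⟩ := level_bounds H k r' hr'.1
  have hLp2' : k ≤ levelOf H p' + 3 := le_trans hLp2 (by have := hE p'; omega)
  have hLq2' : k ≤ levelOf H q' + 3 := le_trans hLq2 (by have := hE q'; omega)
  have hLr2' : k ≤ levelOf H r' + 3 := le_trans hLr2 (by have := hE r'; omega)
  -- finsets
  set I := H.filter (fun h => IsBelow h p' ∧ IsBelow h r') with hI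
  set S1 := H.filter (fun h => IsBelow h p' ∧ ¬ IsBelow h r') with hS1
  set S2 := H.filter (fun h => IsBelow h r' ∧ ¬ IsBelow h p') with hS2
  set cross := H.filter (fun h => (gpset h ∩ segment ℝ p' r').Nonempty) with hcross
  have hC : crDist H p' r' = cross.card := rfl
  -- level p' / r' decompositions
  have hLpI : I.card + S1.card = levelOf H p' :=
    filter_split H (fun h => IsBelow h p') (fun h => IsBelow h r')
  have hI' : H.filter (fun h => IsBelow h r' ∧ IsBelow h p') = I := by
    rw [hI]; apply Finset.filter_congr; intro h _; constructor <;> (intro hh; tauto)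
  have hLrI : I.card + S2.card = levelOf H r' := by
    have := filter_split H (fun h => IsBelow h r') (fun h => IsBelow h p')
    rwa [hI'] at this
  -- S1, S2 cross the segment
  have hS1sub : S1 ⊆ cross := by
    intro h hh
    obtain ⟨hhH, hb1, hb2⟩ := Finset.mem_filter.mp hh
    rw [isBelow_iff] at hb1 hb2
    push_neg at hb2
    obtain ⟨z, hzseg, hzg⟩ := exists_on_segment h p' r' hb1.le hb2
    exact Finset.mem_filter.mpr ⟨hhH, z, hzg, hzseg⟩
  have hS2sub : S2 ⊆ cross := by
    intro h hh
    obtain ⟨hhH, hb1, hb2⟩ := Finset.mem_filter.mp hh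
    rw [isBelow_iff] at hb1 hb2
    push_neg at hb2
    obtain ⟨z, hzseg, hzg⟩ := exists_on_segment h r' p' hb1.le hb2
    rw [segment_symm] at hzseg
    exact Finset.mem_filter.mpr ⟨hhH, z, hzg, hzseg⟩
  have hdisj : Disjoint S1 S2 := by
    rw [Finset.disjoint_left]
    intro h h1 h2
    have := (Finset.mem_filter.mp h1).2
    have := (Finset.mem_filter.mp h2).2
    tauto
  have hsum : S1.card + S2.card ≤ cross.card := by
    rw [← Finset.card_union_of_disjoint hdisj]
    exact Finset.card_le_card (Finset.union_subset hS1sub hS2sub)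
  -- level of q'' bounds via convexity
  obtain ⟨a, b, ha, hb, hab, hz⟩ := hq''.1
  have hcomb : ∀ h : GPlane,
      q'' 2 - fval h q'' = a * (p' 2 - fval h p') + b * (r' 2 - fval h r') := by
    intro h
    have := fval_comb h a b hab p' r'
    rwa [hz] at this
  have hlow : I.card ≤ levelOf H q'' := by
    apply Finset.card_le_card
    intro h hh
    obtain ⟨hhH, hb1, hb2⟩ := Finset.mem_filter.mp hh
    refine Finset.mem_filter.mpr ⟨hhH, ?_⟩
    rw [isBelow_iff] at hb1 hb2 ⊢
    have := hcomb h
    have hpos := comb_pos ha hb hab (by linarith : (0:ℝ) < p' 2 - fval h p')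
      (by linarith : (0:ℝ) < r' 2 - fval h r')
    linarith
  have hUset : levelOf H q'' ≤ I.card + S1.card + S2.card := by
    have hsub : H.filter (fun h => IsBelow h q'') ⊆ I ∪ S1 ∪ S2 := by
      intro h hh
      obtain ⟨hhH, hbq⟩ := Finset.mem_filter.mp hh
      rw [isBelow_iff] at hbq
      by_cases hp : IsBelow h p'
      · by_cases hr : IsBelow h r'
        · exact Finset.mem_union_left _ (Finset.mem_union_left _
            (Finset.mem_filter.mpr ⟨hhH, hp, hr⟩))
        · exact Finset.mem_union_left _ (Finset.mem_union_right _
            (Finset.mem_filter.mpr ⟨hhH, hp, hr⟩))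
      · by_cases hr : IsBelow h r'
        · exact Finset.mem_union_right _ (Finset.mem_filter.mpr ⟨hhH, hr, hp⟩)
        · exfalso
          rw [isBelow_iff] at hp hr
          push_neg at hp hr
          have := hcomb h
          have hnp := comb_nonpos ha hb
            (by linarith : p' 2 - fval h p' ≤ 0) (by linarith : r' 2 - fval h r' ≤ 0)
          linarith
    calc levelOf H q'' ≤ (I ∪ S1 ∪ S2).card := Finset.card_le_card hsub
      _ ≤ (I ∪ S1).card + S2.card := Finset.card_union_le _ _
      _ ≤ I.card + S1.card + S2.card := by
          have := Finset.card_union_le I S1; omega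
  -- crossing bound between q'' and q'
  have hfin : 2 * crDist H q'' q' ≤ crDist H p' r' + 12 := by
    rcases le_or_gt (q'' 2) (q' 2) with hle | hlt
    · have hv := vertical_cr H q'' q' e0 e1 hle
      have := hE q'
      rw [hC]
      omega
    · have hv := vertical_cr H q' q'' e0.symm e1.symm hlt.le
      have := hE q''
      rw [crDist_symm H q'' q', hC]
      omega
  have hreal : (2 * crDist H q'' q' : ℝ) ≤ (crDist H p' r' : ℝ) + 12 := by
    exact_mod_cast hfin
  linarith
end

section
/- Let H be a set of n non-vertical planes in ℝ³ in general position and let q ≥ 1 be a parameter. The number of pairs of edges (e, e') of Arr(H) such that the xy-projections of e and e' cross each other and the unique vertical segment connecting e and e' crosses at most q planes of H is O(n³ q). -/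
/-!
Each counted pair `(z₁, z₂)` is pinned down by four planes, `h₁, h₂` through `z₁` and `g₁, g₂`
through `z₂`, and it is a pair with no crossing plane for a subfamily `R ⊆ H` as soon as `R`
contains these four planes and misses the at most `q` planes crossing the open segment. The
Clarkson–Shor sampling argument, keeping each plane with probability `1 / (2 min(q, n))`, thus
reduces the bound to the case `q = 0` with bound `O(|R|³)`.

For `q = 0` fix `h₁, h₂`. Along the line `h₁ ∩ h₂` the height of every other plane above the
line is an affine function of one parameter, and `z₂` lies on the lowest plane strictly above
`z₁`; so `z₁` is a breakpoint of the lower envelope of the positive values of these functions.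
At a breakpoint where both attaining functions have slopes of the same sign, one of them attains
nowhere later, or nowhere earlier; between consecutive breakpoints with slopes of opposite signs
some attaining function changes sign. Hence there are at most `3|R| + 1` breakpoints.
-/

open scoped Classical

/-- A (three-dimensional, open) cell of the arrangement `Arr(H)`:
a connected component of the complement of the union of the planes. -/
def IsCell (H : Finset GPlane) (c : Set (Fin 3 → ℝ)) : Prop :=
  ∃ x : Fin 3 → ℝ, x ∉ ⋃ h ∈ H, gpset h ∧
    c = connectedComponentIn (⋃ h ∈ H, gpset h)ᶜ x

/-- The complexity of a cell: the number of nonempty subsets of at most three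
planes of `H` whose common intersection meets the closure of the cell
(counting the facets, edges and vertices on the cell boundary). -/
noncomputable def cellComplexity (H : Finset GPlane) (c : Set (Fin 3 → ℝ)) : ℕ :=
  (H.powerset.filter (fun S => 1 ≤ S.card ∧ S.card ≤ 3 ∧
    ((⋂ h ∈ S, gpset h) ∩ closure c).Nonempty)).card

/-- The set of vertically aligned pairs of points `(x, y)`, with `x` below `y`,
such that `x` and `y` each lie on (the relative interior of) an edge of the
arrangement — i.e. each lies on two distinct planes of `H` — the
`xy`-projections of the two edges cross (the projected directions are
independent), and the open vertical segment joining `x` to `y` crosses at most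
`q` planes of `H`.  Each such pair corresponds to a pair of edges `(e, e')` of
`Arr(H)` whose projections cross with a connecting vertical segment crossing
at most `q` planes. -/
noncomputable def crossingEdgePairs (H : Finset GPlane) (q : ℕ) :
    Set ((Fin 3 → ℝ) × (Fin 3 → ℝ)) :=
  {z | z.1 0 = z.2 0 ∧ z.1 1 = z.2 1 ∧ z.1 2 < z.2 2 ∧
    ∃ h₁ ∈ H, ∃ h₂ ∈ H, ∃ g₁ ∈ H, ∃ g₂ ∈ H, h₁ ≠ h₂ ∧ g₁ ≠ g₂ ∧
      z.1 ∈ gpset h₁ ∩ gpset h₂ ∧ z.2 ∈ gpset g₁ ∩ gpset g₂ ∧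
      (h₁.1 - h₂.1) * (g₁.2.1 - g₂.2.1) -
        (h₁.2.1 - h₂.2.1) * (g₁.1 - g₂.1) ≠ 0 ∧
      (H.filter (fun h =>
        (gpset h ∩ openSegment ℝ z.1 z.2).Nonempty)).card ≤ q}

open Finset

def affineEval (f : ℝ × ℝ) (t : ℝ) : ℝ := f.1 * t + f.2

def IsLeastPos (S : Finset (ℝ × ℝ)) (f : ℝ × ℝ) (t : ℝ) : Prop :=
  f ∈ S ∧ 0 < affineEval f t ∧ ∀ g ∈ S, 0 < affineEval g t → affineEval f t ≤ affineEval g t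

def IsBreakpoint (S : Finset (ℝ × ℝ)) (t : ℝ) : Prop :=
  ∃ f g, f ≠ g ∧ IsLeastPos S f t ∧ IsLeastPos S g t

lemma monotone_affineEval {f : ℝ × ℝ} (hf : 0 ≤ f.1) : Monotone (affineEval f) :=
  fun s t hst => by unfold affineEval; nlinarith

lemma antitone_affineEval {f : ℝ × ℝ} (hf : f.1 ≤ 0) : Antitone (affineEval f) :=
  fun s t hst => by unfold affineEval; nlinarith

namespace IsLeastPos

variable {S : Finset (ℝ × ℝ)} {f g : ℝ × ℝ} {s t : ℝ}

lemma eval_eq (hf : IsLeastPos S f t) (hg : IsLeastPos S g t) :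
    affineEval f t = affineEval g t :=
  le_antisymm (hf.2.2 g hg.1 hg.2.1) (hg.2.2 f hf.1 hf.2.1)

lemma fst_ne (hf : IsLeastPos S f t) (hg : IsLeastPos S g t) (hfg : f ≠ g) : f.1 ≠ g.1 := by
  intro h
  have := hf.eval_eq hg
  unfold affineEval at this
  exact hfg (Prod.ext h (by rw [h] at this; linarith))

/-- `f - g` decreases strictly, so it cannot be `≤ 0` at `t` and `≥ 0` at the later `s`. -/
lemma eval_nonpos_or_eval_nonpos (hf : IsLeastPos S f t) (hg : IsLeastPos S g s)
    (hfg : f.1 < g.1) (hts : t < s) : affineEval f s ≤ 0 ∨ affineEval g t ≤ 0 := by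
  by_contra! h
  have h₁ := hg.2.2 f hf.1 h.1
  have h₂ := hf.2.2 g hg.1 h.2
  unfold affineEval at *
  nlinarith [mul_pos (sub_pos.2 hfg) (sub_pos.2 hts)]

end IsLeastPos

lemma card_le_card_of_lt_imp_ne {α β : Type*} [LinearOrder α] {s : Finset α} {t : Finset β}
    (φ : α → β) (hφ : ∀ a ∈ s, φ a ∈ t) (h : ∀ a ∈ s, ∀ b ∈ s, a < b → φ a ≠ φ b) :
    #s ≤ #t :=
  card_le_card_of_injOn φ hφ fun a ha b hb hab => by
    by_contra hne
    rcases lt_or_gt_of_ne hne with hlt | hlt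
    exacts [h a ha b hb hlt hab, h b hb a ha hlt hab.symm]

section Breakpoints

variable {S : Finset (ℝ × ℝ)} {T : Finset ℝ} {F G : ℝ → ℝ × ℝ}

lemma card_le_of_slope_nonneg
    (hT : ∀ t ∈ T,
      IsLeastPos S (F t) t ∧ IsLeastPos S (G t) t ∧ (F t).1 < (G t).1 ∧ 0 ≤ (F t).1) :
    #T ≤ #S :=
  card_le_card_of_lt_imp_ne G (fun t ht => (hT t ht).2.1.1) fun t ht s hs hts hG => by
    obtain ⟨hFt, hGt, hlt, hF₀⟩ := hT t ht
    have hGs : IsLeastPos S (G t) s := hG ▸ (hT s hs).2.1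
    rcases hFt.eval_nonpos_or_eval_nonpos hGs hlt hts with h | h
    · linarith [monotone_affineEval hF₀ hts.le, hFt.2.1]
    · linarith [hGt.2.1]

lemma card_le_of_slope_nonpos
    (hT : ∀ t ∈ T,
      IsLeastPos S (F t) t ∧ IsLeastPos S (G t) t ∧ (F t).1 < (G t).1 ∧ (G t).1 ≤ 0) :
    #T ≤ #S :=
  card_le_card_of_lt_imp_ne F (fun t ht => (hT t ht).1.1) fun t ht s hs hts hF => by
    obtain ⟨hFs, hGs, hlt, hG₀⟩ := hT s hs
    rcases (hT t ht).1.eval_nonpos_or_eval_nonpos hGs (hF ▸ hlt) hts with h | h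
    · linarith [hF ▸ hFs.2.1]
    · linarith [antitone_affineEval hG₀ hts.le, hGs.2.1]

/-- Between consecutive breakpoints `t < s` of this kind, `F t` dies or `G s` is born, and each
function dies or is born only once. -/
lemma card_le_of_slope_neg_pos
    (hT : ∀ t ∈ T, IsLeastPos S (F t) t ∧ IsLeastPos S (G t) t ∧ (F t).1 < 0 ∧ 0 < (G t).1) :
    #T ≤ #S + 1 := by
  rcases Nat.eq_zero_or_pos #T with hT₀ | hT₀
  · omega
  obtain ⟨k, hk⟩ := Nat.exists_eq_add_one_of_ne_zero hT₀.ne'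
  set e := T.orderEmbOfFin hk
  have he : ∀ i, IsLeastPos S (F (e i)) (e i) ∧ IsLeastPos S (G (e i)) (e i) ∧
      (F (e i)).1 < 0 ∧ 0 < (G (e i)).1 := fun i => hT _ (T.orderEmbOfFin_mem hk i)
  let φ : Fin k → ℝ × ℝ := fun i =>
    if affineEval (F (e i.castSucc)) (e i.succ) ≤ 0 then F (e i.castSucc) else G (e i.succ)
  suffices #(univ : Finset (Fin k)) ≤ #S by rw [card_univ, Fintype.card_fin] at this; omega
  refine card_le_card_of_lt_imp_ne φ (fun i _ => ?_) fun i _ j _ hij hφ => ?_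
  · unfold φ
    split_ifs
    exacts [(he _).1.1, (he _).2.1.1]
  have hle : e i.succ ≤ e j.castSucc := e.le_iff_le.2 (Fin.succ_le_castSucc_iff.2 hij)
  have hlt : e j.castSucc < e j.succ := e.lt_iff_lt.2 (Fin.castSucc_lt_succ (i := j))
  unfold φ at hφ
  split_ifs at hφ with hi hj hj
  · linarith [antitone_affineEval (he i.castSucc).2.2.1.le hle, hφ ▸ (he j.castSucc).1.2.1]
  · linarith [(he i.castSucc).2.2.1, hφ ▸ (he j.succ).2.2.2]
  · linarith [(he i.succ).2.2.2, hφ ▸ (he j.castSucc).2.2.1]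
  · rcases (he j.castSucc).1.eval_nonpos_or_eval_nonpos (he j.succ).2.1
      (by linarith [(he j.castSucc).2.2.1, (he j.succ).2.2.2]) hlt with h | h
    · exact hj h
    · linarith [monotone_affineEval (he i.succ).2.2.2.le hle, (he i.succ).2.1.2.1, hφ ▸ h]

theorem card_le_of_forall_isBreakpoint (hT : ∀ t ∈ T, IsBreakpoint S t) : #T ≤ 3 * #S + 1 := by
  have hT' : ∀ t ∈ T, ∃ f g, IsLeastPos S f t ∧ IsLeastPos S g t ∧ f.1 < g.1 := by
    intro t ht
    obtain ⟨f, g, hfg, hf, hg⟩ := hT t ht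
    rcases lt_or_gt_of_ne (hf.fst_ne hg hfg) with h | h
    exacts [⟨f, g, hf, hg, h⟩, ⟨g, f, hg, hf, h⟩]
  choose! F G hFG using hT'
  have hfilter : ∀ {p : ℝ → Prop} [DecidablePred p], ∀ t ∈ T.filter p,
      IsLeastPos S (F t) t ∧ IsLeastPos S (G t) t ∧ (F t).1 < (G t).1 ∧ p t :=
    fun t ht => (mem_filter.1 ht).elim fun ht hp =>
      ⟨(hFG t ht).1, (hFG t ht).2.1, (hFG t ht).2.2, hp⟩
  have h₁ := card_le_of_slope_nonneg (hfilter (p := fun t => 0 ≤ (F t).1))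
  have h₂ := card_le_of_slope_nonpos (hfilter (p := fun t => (G t).1 ≤ 0))
  have h₃ := card_le_of_slope_neg_pos fun t ht =>
    let ⟨hF, hG, _, hp⟩ := hfilter (p := fun t => (F t).1 < 0 ∧ 0 < (G t).1) t ht
    ⟨hF, hG, hp⟩
  set A := {t ∈ T | 0 ≤ (F t).1}
  set B := {t ∈ T | (G t).1 ≤ 0}
  set C := {t ∈ T | (F t).1 < 0 ∧ 0 < (G t).1}
  have hcover : T ⊆ A ∪ B ∪ C := by
    intro t ht
    simp only [A, B, C, mem_union, mem_filter]
    by_contra! h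
    linarith [h.1.1 ht, h.1.2 ht, h.2 ht (h.1.1 ht)]
  calc #T ≤ #(A ∪ B ∪ C) := card_le_card hcover
    _ ≤ #A + #B + #C := (card_union_le _ _).trans (Nat.add_le_add_right (card_union_le _ _) _)
    _ ≤ 3 * #S + 1 := by omega

end Breakpoints

section ClarksonShor

variable {γ ι : Type*} [DecidableEq γ]

/-- The probability of drawing `R` when every element of `H` is kept independently with
probability `p` (for `R ⊆ H`). -/
def sampleWeight (H : Finset γ) (p : ℝ) (R : Finset γ) : ℝ := p ^ #R * (1 - p) ^ (#H - #R)

omit [DecidableEq γ] in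
lemma sampleWeight_nonneg {p : ℝ} (hp₀ : 0 ≤ p) (hp₁ : p ≤ 1) (H R : Finset γ) :
    0 ≤ sampleWeight H p R :=
  mul_nonneg (pow_nonneg hp₀ _) (pow_nonneg (sub_nonneg.2 hp₁) _)

lemma sum_sampleWeight (p : ℝ) {H A B : Finset γ} (hA : A ⊆ H) (hB : B ⊆ H) (hAB : Disjoint A B) :
    ∑ R ∈ H.powerset with A ⊆ R ∧ Disjoint R B, sampleWeight H p R = p ^ #A * (1 - p) ^ #B := by
  have hAHB : A ⊆ H \ B := subset_sdiff.2 ⟨hA, hAB⟩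
  have hfilter : {R ∈ H.powerset | A ⊆ R ∧ Disjoint R B} = Icc A (H \ B) := by
    ext R
    simp only [mem_filter, mem_powerset, mem_Icc, subset_sdiff]
    tauto
  have hC : #((H \ B) \ A) + #A + #B = #H := by
    have := card_sdiff_of_subset hAHB
    have := card_sdiff_of_subset hB
    have := card_le_card hAHB
    have := card_le_card hB
    omega
  have hdisj : ∀ U ∈ ((H \ B) \ A).powerset, Disjoint A U := fun U hU =>
    (disjoint_sdiff_self_left.mono_left (mem_powerset.1 hU)).symm
  rw [hfilter, Icc_eq_image_powerset hAHB, sum_image fun U hU U' hU' h => by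
    rw [← union_sdiff_cancel_left (hdisj U hU), ← union_sdiff_cancel_left (hdisj U' hU'), h]]
  calc ∑ U ∈ ((H \ B) \ A).powerset, sampleWeight H p (A ∪ U)
      = ∑ U ∈ ((H \ B) \ A).powerset,
          p ^ #A * (1 - p) ^ #B * (p ^ #U * (1 - p) ^ (#((H \ B) \ A) - #U)) := by
        refine sum_congr rfl fun U hU => ?_
        have hUC := card_le_card (mem_powerset.1 hU)
        rw [sampleWeight, card_union_of_disjoint (hdisj U hU),
          show #H - (#A + #U) = #B + (#((H \ B) \ A) - #U) by omega]
        ring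
    _ = p ^ #A * (1 - p) ^ #B := by
        rw [← mul_sum, sum_pow_mul_eq_add_pow, add_sub_cancel, one_pow, mul_one]

lemma sum_pow_card_insert_le {p : ℝ} (hp : 0 ≤ p) (H S : Finset γ) :
    ∑ c ∈ H, p ^ #(insert c S) ≤ (#H * p + #S) * p ^ #S := by
  calc ∑ c ∈ H, p ^ #(insert c S)
      ≤ ∑ c ∈ H, ((if c ∈ S then p ^ #S else 0) + p ^ #S * p) := by
        refine sum_le_sum fun c _ => ?_
        by_cases hc : c ∈ S
        · simp only [hc, insert_eq_of_mem, if_true, le_add_iff_nonneg_right]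
          positivity
        · simp [hc, card_insert_of_notMem, pow_succ]
    _ = #(H ∩ S) * p ^ #S + #H * (p ^ #S * p) := by
        rw [sum_add_distrib, sum_ite_mem, sum_const, sum_const, nsmul_eq_mul, nsmul_eq_mul]
    _ ≤ #S * p ^ #S + #H * (p ^ #S * p) := by
        gcongr
        exact inter_subset_right
    _ = (#H * p + #S) * p ^ #S := by ring

lemma sum_sampleWeight_mul_card_pow_le {p : ℝ} (hp₀ : 0 ≤ p) (H : Finset γ) (k : ℕ) :
    ∀ S ⊆ H, ∑ R ∈ H.powerset with S ⊆ R, sampleWeight H p R * #R ^ k ≤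
      p ^ #S * ∏ i ∈ range k, (#H * p + #S + i) := by
  induction k with
  | zero =>
    intro S hS
    have := sum_sampleWeight p hS (empty_subset H) (disjoint_empty_right S)
    simp only [disjoint_empty_right, and_true, card_empty, pow_zero, mul_one] at this
    simp [this]
  | succ k ih =>
    intro S hS
    calc ∑ R ∈ H.powerset with S ⊆ R, sampleWeight H p R * #R ^ (k + 1)
        = ∑ R ∈ H.powerset with S ⊆ R, ∑ c ∈ H,
            if c ∈ R then sampleWeight H p R * #R ^ k else 0 := by
          refine sum_congr rfl fun R hR => ?_
          rw [← sum_filter, sum_const, filter_mem_eq_inter,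
            inter_eq_right.2 (mem_powerset.1 (mem_filter.1 hR).1), nsmul_eq_mul, pow_succ]
          ring
      _ = ∑ c ∈ H, ∑ R ∈ H.powerset with insert c S ⊆ R, sampleWeight H p R * #R ^ k := by
          rw [sum_comm]
          refine sum_congr rfl fun c _ => ?_
          rw [← sum_filter, filter_filter]
          refine sum_congr (filter_congr fun R _ => ?_) fun _ _ => rfl
          rw [insert_subset_iff, and_comm]
      _ ≤ ∑ c ∈ H, p ^ #(insert c S) * ∏ i ∈ range k, (#H * p + (#S + 1 : ℕ) + i) := by
          refine sum_le_sum fun c hc => (ih _ (insert_subset hc hS)).trans ?_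
          gcongr with i
          exact_mod_cast card_insert_le c S
      _ ≤ (#H * p + #S) * p ^ #S * ∏ i ∈ range k, (#H * p + (#S + 1 : ℕ) + i) := by
          rw [← sum_mul]
          gcongr
          exact sum_pow_card_insert_le hp₀ H S
      _ = p ^ #S * ∏ i ∈ range (k + 1), (#H * p + #S + i) := by
          rw [prod_range_succ']
          push_cast
          ring_nf

lemma sum_sampleWeight_mul_card_filter (p : ℝ) {H : Finset γ} {P : Finset ι} {D K : ι → Finset γ}
    (hD : ∀ π ∈ P, D π ⊆ H) (hK : ∀ π ∈ P, K π ⊆ H) (hDK : ∀ π ∈ P, Disjoint (D π) (K π)) :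
    ∑ R ∈ H.powerset, sampleWeight H p R * #{π ∈ P | D π ⊆ R ∧ Disjoint R (K π)} =
      ∑ π ∈ P, p ^ #(D π) * (1 - p) ^ #(K π) := by
  calc _ = ∑ R ∈ H.powerset, ∑ π ∈ P,
        if D π ⊆ R ∧ Disjoint R (K π) then sampleWeight H p R else 0 := by
        refine sum_congr rfl fun R _ => ?_
        rw [← sum_filter, sum_const, nsmul_eq_mul, mul_comm]
    _ = ∑ π ∈ P, ∑ R ∈ H.powerset with D π ⊆ R ∧ Disjoint R (K π), sampleWeight H p R := by
        rw [sum_comm]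
        simp_rw [sum_filter]
    _ = _ := sum_congr rfl fun π hπ => sum_sampleWeight p (hD π hπ) (hK π hπ) (hDK π hπ)

/-- Each configuration with at most `m` conflicts survives a `p`-sample with probability at least
`p ^ (b + e) / 2`. -/
lemma card_mul_le_of_card_conflicts_le {H : Finset γ} {P : Finset ι} {D K : ι → Finset γ}
    {b e c m : ℕ} {p : ℝ} (hp₀ : 0 ≤ p) (hp₁ : p ≤ 1) (hmp : m * p ≤ 1 / 2)
    (hD : ∀ π ∈ P, D π ⊆ H ∧ #(D π) ≤ b + e) (hK : ∀ π ∈ P, K π ⊆ H ∧ #(K π) ≤ m)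
    (hDK : ∀ π ∈ P, Disjoint (D π) (K π))
    (hbase : ∀ R ⊆ H, #{π ∈ P | D π ⊆ R ∧ Disjoint R (K π)} ≤ c * #R ^ b) :
    #P * (p ^ (b + e) / 2) ≤ c * ∏ i ∈ range b, (#H * p + i) := by
  have hlow : ∀ π ∈ P, p ^ (b + e) / 2 ≤ p ^ #(D π) * (1 - p) ^ #(K π) := by
    intro π hπ
    have hbern : 1 / 2 ≤ (1 - p) ^ m := by
      have := one_add_mul_le_pow (a := -p) (by linarith) m
      rw [← sub_eq_add_neg] at this
      linarith
    have hKm : 1 / 2 ≤ (1 - p) ^ #(K π) :=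
      hbern.trans (pow_le_pow_of_le_one (by linarith) (by linarith) (hK π hπ).2)
    calc p ^ (b + e) / 2 = p ^ (b + e) * (1 / 2) := by ring
      _ ≤ p ^ #(D π) * (1 - p) ^ #(K π) :=
        mul_le_mul (pow_le_pow_of_le_one hp₀ hp₁ (hD π hπ).2) hKm (by norm_num) (by positivity)
  calc #P * (p ^ (b + e) / 2) = ∑ π ∈ P, p ^ (b + e) / 2 := by rw [sum_const, nsmul_eq_mul]
    _ ≤ ∑ π ∈ P, p ^ #(D π) * (1 - p) ^ #(K π) := sum_le_sum hlow
    _ = ∑ R ∈ H.powerset, sampleWeight H p R * #{π ∈ P | D π ⊆ R ∧ Disjoint R (K π)} :=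
        (sum_sampleWeight_mul_card_filter p (fun π hπ => (hD π hπ).1) (fun π hπ => (hK π hπ).1)
          hDK).symm
    _ ≤ ∑ R ∈ H.powerset with ∅ ⊆ R, sampleWeight H p R * (c * #R ^ b) := by
        rw [filter_true_of_mem fun R _ => empty_subset R]
        refine sum_le_sum fun R hR => mul_le_mul_of_nonneg_left ?_ (sampleWeight_nonneg hp₀ hp₁ _ _)
        exact_mod_cast hbase R (mem_powerset.1 hR)
    _ ≤ c * ∏ i ∈ range b, (#H * p + i) := by
        simp_rw [mul_left_comm _ (c : ℝ), ← mul_sum]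
        gcongr
        simpa using sum_sampleWeight_mul_card_pow_le hp₀ H b ∅ (empty_subset H)

lemma prod_range_add_le {x : ℝ} (hx : 1 / 2 ≤ x) (b : ℕ) :
    ∏ i ∈ range b, (x + i) ≤ (∏ i ∈ range b, (2 * i + 1 : ℝ)) * x ^ b := by
  rw [← card_range b, ← prod_const, card_range, ← prod_mul_distrib]
  gcongr with i
  nlinarith

theorem card_le_of_card_conflicts_le {H : Finset γ} {P : Finset ι} {D K : ι → Finset γ}
    {b e c q : ℕ} (hq : 1 ≤ q) (hD : ∀ π ∈ P, D π ⊆ H ∧ #(D π) ≤ b + e)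
    (hK : ∀ π ∈ P, K π ⊆ H ∧ #(K π) ≤ q) (hDK : ∀ π ∈ P, Disjoint (D π) (K π))
    (hbase : ∀ R ⊆ H, #{π ∈ P | D π ⊆ R ∧ Disjoint R (K π)} ≤ c * #R ^ b) :
    #P ≤ 2 ^ (e + 1) * (∏ i ∈ range b, (2 * i + 1)) * c * #H ^ b * q ^ e := by
  rcases Nat.eq_zero_or_pos #H with hH | hH
  · have hP : {π ∈ P | D π ⊆ H ∧ Disjoint H (K π)} = P :=
      filter_true_of_mem fun π hπ => ⟨(hD π hπ).1, by simp [card_eq_zero.1 hH]⟩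
    have h₁ : 1 ≤ 2 ^ (e + 1) * ∏ i ∈ range b, (2 * i + 1) := Nat.one_le_iff_ne_zero.2 <|
      mul_ne_zero (by positivity) (prod_ne_zero_iff.2 fun _ _ => by omega)
    calc #P ≤ c * #H ^ b := hP ▸ hbase H subset_rfl
      _ = 1 * c * #H ^ b * 1 := by ring
      _ ≤ _ := by gcongr; exact Nat.one_le_pow _ _ hq
  set m := min q #H
  set p : ℝ := 1 / (2 * m) with hp
  have hm : (1 : ℝ) ≤ m := by exact_mod_cast le_min hq hH
  have hmp : m * p = 1 / 2 := by rw [hp]; field_simp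
  have hp₀ : 0 < p := by positivity
  have hnp : 1 / 2 ≤ #H * p := by
    rw [← hmp]
    gcongr
    exact_mod_cast min_le_right q #H
  set A := ∏ i ∈ range b, (2 * i + 1 : ℝ) with hA
  have key : #P * (p ^ (b + e) / 2) ≤ c * (A * (#H * p) ^ b) :=
    (card_mul_le_of_card_conflicts_le hp₀.le (by nlinarith) hmp.le hD
      (fun π hπ => ⟨(hK π hπ).1, le_min (hK π hπ).2 (card_le_card (hK π hπ).1)⟩) hDK hbase).trans
      (by gcongr; exact prod_range_add_le hnp b)
  have hP : (#P : ℝ) * p ^ e ≤ 2 * c * A * #H ^ b := by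
    refine le_of_mul_le_mul_right ?_ (pow_pos hp₀ b)
    calc #P * p ^ e * p ^ b = 2 * (#P * (p ^ (b + e) / 2)) := by ring
      _ ≤ 2 * (c * (A * (#H * p) ^ b)) := by linarith
      _ = 2 * c * A * #H ^ b * p ^ b := by ring
  suffices (#P : ℝ) ≤ 2 ^ (e + 1) * A * c * #H ^ b * q ^ e by
    rw [hA] at this
    exact_mod_cast this
  calc (#P : ℝ) = #P * p ^ e * (2 * m) ^ e := by
        rw [mul_assoc, ← mul_pow, show p * (2 * m) = 1 by linarith, one_pow, mul_one]
    _ ≤ 2 * c * A * #H ^ b * (2 * q) ^ e := by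
        gcongr
        exact_mod_cast min_le_left q #H
    _ = _ := by ring

end ClarksonShor

def heightAt (h : GPlane) (x y : ℝ) : ℝ := h.1 * x + h.2.1 * y + h.2.2

lemma heightAt_sub (f g : GPlane) (x y : ℝ) :
    heightAt (f - g) x y = heightAt f x y - heightAt g x y := by
  simp only [heightAt, Prod.fst_sub, Prod.snd_sub]
  ring

lemma heightAt_eq_of_mem {h : GPlane} {z : Fin 3 → ℝ} (hz : z ∈ gpset h) :
    heightAt h (z 0) (z 1) = z 2 :=
  hz.symm

lemma heightAt_sub_eq_zero_of_mem {h₁ h₂ : GPlane} {z : Fin 3 → ℝ}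
    (hz : z ∈ gpset h₁ ∩ gpset h₂) : heightAt (h₁ - h₂) (z 0) (z 1) = 0 := by
  rw [heightAt_sub, heightAt_eq_of_mem hz.1, heightAt_eq_of_mem hz.2, sub_self]

lemma funext_fin3 {z w : Fin 3 → ℝ} (h₀ : z 0 = w 0) (h₁ : z 1 = w 1) (h₂ : z 2 = w 2) :
    z = w := by
  funext i
  fin_cases i <;> assumption

/-- A coordinate on the line `heightAt M x y = 0` of the `xy`-plane. -/
def lineCoord (M : GPlane) (x y : ℝ) : ℝ := -M.2.1 * x + M.1 * y

/-- The affine function of `lineCoord M` that agrees with `heightAt L` on the line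
`heightAt M x y = 0`. -/
noncomputable def restrictToLine (M L : GPlane) : ℝ × ℝ :=
  ((L.2.1 * M.1 - L.1 * M.2.1) / (M.1 ^ 2 + M.2.1 ^ 2),
    L.2.2 - (L.1 * M.1 + L.2.1 * M.2.1) * M.2.2 / (M.1 ^ 2 + M.2.1 ^ 2))

section Line

variable {M : GPlane} {x y x' y' : ℝ}

lemma affineEval_restrictToLine (L : GPlane) (hM : M.1 ^ 2 + M.2.1 ^ 2 ≠ 0)
    (hxy : heightAt M x y = 0) :
    affineEval (restrictToLine M L) (lineCoord M x y) = heightAt L x y := by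
  unfold affineEval restrictToLine lineCoord heightAt at *
  field_simp
  linear_combination (-(L.1 * M.1 + L.2.1 * M.2.1)) * hxy

lemma eq_of_lineCoord_eq (hM : M.1 ^ 2 + M.2.1 ^ 2 ≠ 0) (hxy : heightAt M x y = 0)
    (hxy' : heightAt M x' y' = 0) (h : lineCoord M x y = lineCoord M x' y') : x = x' ∧ y = y' := by
  unfold heightAt lineCoord at *
  constructor
  · refine sub_eq_zero.1 (mul_left_cancel₀ hM ?_)
    linear_combination M.1 * (hxy - hxy') - M.2.1 * h
  · refine sub_eq_zero.1 (mul_left_cancel₀ hM ?_)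
    linear_combination M.2.1 * (hxy - hxy') + M.1 * h

end Line

/-- Nonzero exactly when the `xy`-projections of the lines `h₁ ∩ h₂` and `g₁ ∩ g₂` cross, as
required in `crossingEdgePairs`. -/
def crossDet (h₁ h₂ g₁ g₂ : GPlane) : ℝ :=
  (h₁.1 - h₂.1) * (g₁.2.1 - g₂.2.1) - (h₁.2.1 - h₂.2.1) * (g₁.1 - g₂.1)

section CrossDet

variable {h₁ h₂ g₁ g₂ : GPlane}

lemma normSq_ne_zero_of_crossDet_ne_zero (h : crossDet h₁ h₂ g₁ g₂ ≠ 0) :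
    (h₁ - h₂).1 ^ 2 + (h₁ - h₂).2.1 ^ 2 ≠ 0 := by
  intro h0
  apply h
  simp only [Prod.fst_sub, Prod.snd_sub] at h0
  have ha : h₁.1 - h₂.1 = 0 := by
    nlinarith [sq_nonneg (h₁.1 - h₂.1), sq_nonneg (h₁.2.1 - h₂.2.1)]
  have hb : h₁.2.1 - h₂.2.1 = 0 := by
    nlinarith [sq_nonneg (h₁.1 - h₂.1), sq_nonneg (h₁.2.1 - h₂.2.1)]
  simp [crossDet, ha, hb]

lemma restrictToLine_ne_of_crossDet_ne_zero (h : crossDet h₁ h₂ g₁ g₂ ≠ 0) :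
    restrictToLine (h₁ - h₂) (g₁ - h₁) ≠ restrictToLine (h₁ - h₂) (g₂ - h₁) := by
  have hN := normSq_ne_zero_of_crossDet_ne_zero h
  intro heq
  apply h
  have h1 := congrArg Prod.fst heq
  simp only [restrictToLine, Prod.fst_sub, Prod.snd_sub] at h1 hN
  field_simp at h1
  unfold crossDet
  linarith

lemma left_ne_of_crossDet_ne_zero (h : crossDet h₁ h₂ g₁ g₂ ≠ 0) : h₁ ≠ h₂ := by
  rintro rfl
  simp [crossDet] at h

lemma right_ne_of_crossDet_ne_zero (h : crossDet h₁ h₂ g₁ g₂ ≠ 0) : g₁ ≠ g₂ := by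
  rintro rfl
  simp [crossDet] at h

end CrossDet

def IsVerticalPair (z : (Fin 3 → ℝ) × (Fin 3 → ℝ)) : Prop :=
  z.1 0 = z.2 0 ∧ z.1 1 = z.2 1 ∧ z.1 2 < z.2 2

def IsEdgePairOn (h₁ h₂ g₁ g₂ : GPlane) (z : (Fin 3 → ℝ) × (Fin 3 → ℝ)) : Prop :=
  IsVerticalPair z ∧ z.1 ∈ gpset h₁ ∩ gpset h₂ ∧ z.2 ∈ gpset g₁ ∩ gpset g₂ ∧
    crossDet h₁ h₂ g₁ g₂ ≠ 0

noncomputable def crossers (H : Finset GPlane) (z : (Fin 3 → ℝ) × (Fin 3 → ℝ)) :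
    Finset GPlane :=
  H.filter fun h => (gpset h ∩ openSegment ℝ z.1 z.2).Nonempty

lemma mem_crossingEdgePairs {H : Finset GPlane} {q : ℕ} {z : (Fin 3 → ℝ) × (Fin 3 → ℝ)} :
    z ∈ crossingEdgePairs H q ↔
      (∃ h₁ ∈ H, ∃ h₂ ∈ H, ∃ g₁ ∈ H, ∃ g₂ ∈ H, IsEdgePairOn h₁ h₂ g₁ g₂ z) ∧
        #(crossers H z) ≤ q := by
  constructor
  · rintro ⟨e₀, e₁, e₂, h₁, hh₁, h₂, hh₂, g₁, hg₁, g₂, hg₂, -, -, hz₁, hz₂, hdet, hq⟩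
    exact ⟨⟨h₁, hh₁, h₂, hh₂, g₁, hg₁, g₂, hg₂, ⟨e₀, e₁, e₂⟩, hz₁, hz₂, hdet⟩, hq⟩
  · rintro ⟨⟨h₁, hh₁, h₂, hh₂, g₁, hg₁, g₂, hg₂, ⟨e₀, e₁, e₂⟩, hz₁, hz₂, hdet⟩, hq⟩
    exact ⟨e₀, e₁, e₂, h₁, hh₁, h₂, hh₂, g₁, hg₁, g₂, hg₂, left_ne_of_crossDet_ne_zero hdet,
      right_ne_of_crossDet_ne_zero hdet, hz₁, hz₂, hdet, hq⟩

namespace IsVerticalPair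

variable {z z' : (Fin 3 → ℝ) × (Fin 3 → ℝ)}

lemma crosses_iff (hz : IsVerticalPair z) (f : GPlane) :
    (gpset f ∩ openSegment ℝ z.1 z.2).Nonempty ↔
      z.1 2 < heightAt f (z.1 0) (z.1 1) ∧ heightAt f (z.1 0) (z.1 1) < z.2 2 := by
  obtain ⟨e₀, e₁, e₂⟩ := hz
  rw [openSegment_eq_image']
  constructor
  · rintro ⟨_, hw, θ, ⟨hθ₀, hθ₁⟩, rfl⟩
    simp only [gpset, Set.mem_ofPred_eq, Pi.add_apply, Pi.smul_apply, Pi.sub_apply, smul_eq_mul,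
      ← e₀, ← e₁, sub_self, mul_zero, add_zero] at hw
    unfold heightAt
    constructor <;> nlinarith [mul_pos hθ₀ (sub_pos.2 e₂), mul_pos (sub_pos.2 hθ₁) (sub_pos.2 e₂)]
  · rintro ⟨hlo, hhi⟩
    refine ⟨_, ?_, (heightAt f (z.1 0) (z.1 1) - z.1 2) / (z.2 2 - z.1 2),
      ⟨div_pos (by linarith) (by linarith), (div_lt_one (by linarith)).2 (by linarith)⟩, rfl⟩
    simp only [gpset, Set.mem_ofPred_eq, Pi.add_apply, Pi.smul_apply, Pi.sub_apply, smul_eq_mul,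
      ← e₀, ← e₁, sub_self, mul_zero, add_zero]
    rw [div_mul_cancel₀ _ (by linarith)]
    unfold heightAt
    ring

lemma snd_two_le_of_crossers_eq_empty {R : Finset GPlane} {g : GPlane} (hz : IsVerticalPair z)
    (hz' : IsVerticalPair z') (h : z.1 = z'.1) (hg : g ∈ R) (hzg : z.2 ∈ gpset g)
    (hcr : crossers R z' = ∅) : z'.2 2 ≤ z.2 2 := by
  by_contra! hlt
  refine filter_eq_empty_iff.1 hcr hg ((hz'.crosses_iff g).2 ?_)
  have hgz : heightAt g (z'.1 0) (z'.1 1) = z.2 2 := by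
    rw [← h, hz.1, hz.2.1, heightAt_eq_of_mem hzg]
  rw [hgz, ← h]
  exact ⟨hz.2.2, hlt⟩

/-- Over a given lower point, the upper point of a vertical pair whose open segment meets no
plane of `R` is the lowest point of `R` strictly above it. -/
lemma eq_of_fst_eq {R : Finset GPlane} {g g' : GPlane} (hz : IsVerticalPair z)
    (hz' : IsVerticalPair z') (h : z.1 = z'.1) (hg : g ∈ R) (hzg : z.2 ∈ gpset g) (hg' : g' ∈ R)
    (hzg' : z'.2 ∈ gpset g') (hcr : crossers R z = ∅) (hcr' : crossers R z' = ∅) : z = z' := by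
  have h₂ := le_antisymm (hz'.snd_two_le_of_crossers_eq_empty hz h.symm hg' hzg' hcr)
    (hz.snd_two_le_of_crossers_eq_empty hz' h hg hzg hcr')
  refine Prod.ext h (funext_fin3 ?_ ?_ h₂)
  · rw [← hz.1, ← hz'.1, h]
  · rw [← hz.2.1, ← hz'.2.1, h]

end IsVerticalPair

namespace IsEdgePairOn

variable {h₁ h₂ g₁ g₂ : GPlane} {z z' : (Fin 3 → ℝ) × (Fin 3 → ℝ)}

lemma not_crosses (hz : IsEdgePairOn h₁ h₂ g₁ g₂ z) {f : GPlane}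
    (hf : f ∈ ({h₁, h₂, g₁, g₂} : Finset GPlane)) :
    ¬ (gpset f ∩ openSegment ℝ z.1 z.2).Nonempty := by
  obtain ⟨hv, ⟨hh₁, hh₂⟩, ⟨hg₁, hg₂⟩, -⟩ := hz
  rw [hv.crosses_iff]
  simp only [mem_insert, mem_singleton] at hf
  have e₀ := hv.1
  have e₁ := hv.2.1
  rcases hf with rfl | rfl | rfl | rfl
  · exact fun h => h.1.ne hh₁
  · exact fun h => h.1.ne hh₂
  · exact fun h => h.2.ne' (by rw [e₀, e₁]; exact hg₁)
  · exact fun h => h.2.ne' (by rw [e₀, e₁]; exact hg₂)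

/-- Crossing projections pin down the vertical line, hence the pair. -/
lemma eq (hz : IsEdgePairOn h₁ h₂ g₁ g₂ z) (hz' : IsEdgePairOn h₁ h₂ g₁ g₂ z') : z = z' := by
  obtain ⟨⟨e₀, e₁, -⟩, ⟨a₁, a₂⟩, ⟨b₁, b₂⟩, hdet⟩ := hz
  obtain ⟨⟨e₀', e₁', -⟩, ⟨a₁', a₂'⟩, ⟨b₁', b₂'⟩, -⟩ := hz'
  simp only [gpset, Set.mem_ofPred_eq, ← e₀, ← e₁, ← e₀', ← e₁'] at a₁ a₂ b₁ b₂ a₁' a₂' b₁' b₂'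
  have hx : z.1 0 = z'.1 0 := by
    refine sub_eq_zero.1 (mul_left_cancel₀ hdet ?_)
    unfold crossDet
    linear_combination
      (g₁.2.1 - g₂.2.1) * (a₁' - a₂' - a₁ + a₂) - (h₁.2.1 - h₂.2.1) * (b₁' - b₂' - b₁ + b₂)
  have hy : z.1 1 = z'.1 1 := by
    refine sub_eq_zero.1 (mul_left_cancel₀ hdet ?_)
    unfold crossDet
    linear_combination
      (h₁.1 - h₂.1) * (b₁' - b₂' - b₁ + b₂) - (g₁.1 - g₂.1) * (a₁' - a₂' - a₁ + a₂)
  refine Prod.ext (funext_fin3 hx hy ?_) (funext_fin3 ?_ ?_ ?_)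
  · rw [a₁, a₁', hx, hy]
  · rw [← e₀, ← e₀', hx]
  · rw [← e₁, ← e₁', hy]
  · rw [b₁, b₁', hx, hy]

end IsEdgePairOn

lemma crossingEdgePairs_finite (H : Finset GPlane) (q : ℕ) : (crossingEdgePairs H q).Finite := by
  have hcover : crossingEdgePairs H q ⊆ ⋃ Q ∈ (H ×ˢ H) ×ˢ (H ×ˢ H),
      {z | IsEdgePairOn Q.1.1 Q.1.2 Q.2.1 Q.2.2 z} := by
    intro z hz
    obtain ⟨⟨h₁, hh₁, h₂, hh₂, g₁, hg₁, g₂, hg₂, hQ⟩, -⟩ := mem_crossingEdgePairs.1 hz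
    simp only [Set.mem_iUnion]
    exact ⟨((h₁, h₂), (g₁, g₂)),
      mem_product.2 ⟨mem_product.2 ⟨hh₁, hh₂⟩, mem_product.2 ⟨hg₁, hg₂⟩⟩, hQ⟩
  refine Set.Finite.subset ?_ hcover
  exact Set.Finite.biUnion' (finite_toSet _) fun Q _ =>
    Set.Subsingleton.finite fun z hz z' hz' => IsEdgePairOn.eq hz hz'

lemma isLeastPos_restrictToLine {R : Finset GPlane} {h₁ h₂ g : GPlane}
    {z : (Fin 3 → ℝ) × (Fin 3 → ℝ)} (hz : IsVerticalPair z) (hz₁ : z.1 ∈ gpset h₁ ∩ gpset h₂)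
    (hN : (h₁ - h₂).1 ^ 2 + (h₁ - h₂).2.1 ^ 2 ≠ 0) (hcr : crossers R z = ∅) (hg : g ∈ R)
    (hzg : z.2 ∈ gpset g) :
    IsLeastPos (R.image fun f => restrictToLine (h₁ - h₂) (f - h₁))
      (restrictToLine (h₁ - h₂) (g - h₁)) (lineCoord (h₁ - h₂) (z.1 0) (z.1 1)) := by
  have hline := heightAt_sub_eq_zero_of_mem hz₁
  have hval : ∀ f, affineEval (restrictToLine (h₁ - h₂) (f - h₁))
      (lineCoord (h₁ - h₂) (z.1 0) (z.1 1)) = heightAt f (z.1 0) (z.1 1) - z.1 2 := fun f => by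
    rw [affineEval_restrictToLine _ hN hline, heightAt_sub, heightAt_eq_of_mem hz₁.1]
  have hgz : heightAt g (z.1 0) (z.1 1) = z.2 2 := by rw [hz.1, hz.2.1, heightAt_eq_of_mem hzg]
  refine ⟨mem_image_of_mem _ hg, by rw [hval, hgz]; linarith [hz.2.2], ?_⟩
  simp only [mem_image, forall_exists_index, and_imp, forall_apply_eq_imp_iff₂, hval, hgz]
  intro f hf hpos
  have := filter_eq_empty_iff.1 hcr hf
  rw [hz.crosses_iff] at this
  linarith [not_lt.1 fun h => this ⟨by linarith, h⟩]

lemma card_le_of_crossers_eq_empty_of_isEdgePairOn {R : Finset GPlane} {h₁ h₂ : GPlane}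
    {F : Finset ((Fin 3 → ℝ) × (Fin 3 → ℝ))}
    (hF : ∀ z ∈ F, crossers R z = ∅ ∧ ∃ g₁ ∈ R, ∃ g₂ ∈ R, IsEdgePairOn h₁ h₂ g₁ g₂ z) :
    #F ≤ 3 * #R + 1 := by
  set τ : (Fin 3 → ℝ) × (Fin 3 → ℝ) → ℝ := fun z => lineCoord (h₁ - h₂) (z.1 0) (z.1 1)
  have hinj : Set.InjOn τ F := by
    intro z hz z' hz' hτ
    obtain ⟨hcr, g₁, hg₁, g₂, -, hv, hz₁, hz₂, hdet⟩ := hF z hz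
    obtain ⟨hcr', g₁', hg₁', g₂', -, hv', hz₁', hz₂', -⟩ := hF z' hz'
    obtain ⟨hx, hy⟩ := eq_of_lineCoord_eq (normSq_ne_zero_of_crossDet_ne_zero hdet)
      (heightAt_sub_eq_zero_of_mem hz₁) (heightAt_sub_eq_zero_of_mem hz₁') hτ
    have h₁z : z.1 = z'.1 := funext_fin3 hx hy
      (by rw [← heightAt_eq_of_mem hz₁.1, ← heightAt_eq_of_mem hz₁'.1, hx, hy])
    exact hv.eq_of_fst_eq hv' h₁z hg₁ hz₂.1 hg₁' hz₂'.1 hcr hcr'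
  calc #F = #(F.image τ) := (card_image_of_injOn hinj).symm
    _ ≤ 3 * #(R.image fun f => restrictToLine (h₁ - h₂) (f - h₁)) + 1 := by
      refine card_le_of_forall_isBreakpoint fun t ht => ?_
      obtain ⟨z, hz, rfl⟩ := mem_image.1 ht
      obtain ⟨hcr, g₁, hg₁, g₂, hg₂, hv, hz₁, hz₂, hdet⟩ := hF z hz
      have hN := normSq_ne_zero_of_crossDet_ne_zero hdet
      exact ⟨_, _, restrictToLine_ne_of_crossDet_ne_zero hdet,
        isLeastPos_restrictToLine hv hz₁ hN hcr hg₁ hz₂.1,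
        isLeastPos_restrictToLine hv hz₁ hN hcr hg₂ hz₂.2⟩
    _ ≤ 3 * #R + 1 := by gcongr; exact card_image_le

theorem ncard_crossingEdgePairs_zero_le (R : Finset GPlane) :
    (crossingEdgePairs R 0).ncard ≤ #R ^ 2 * (3 * #R + 1) := by
  set F := (crossingEdgePairs_finite R 0).toFinset
  have hcover : F ⊆ (R ×ˢ R).biUnion fun p =>
      F.filter fun z => ∃ g₁ ∈ R, ∃ g₂ ∈ R, IsEdgePairOn p.1 p.2 g₁ g₂ z := by
    intro z hz
    obtain ⟨⟨h₁, hh₁, h₂, hh₂, hQ⟩, -⟩ :=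
      mem_crossingEdgePairs.1 ((Set.Finite.mem_toFinset _).1 hz)
    exact mem_biUnion.2 ⟨(h₁, h₂), mem_product.2 ⟨hh₁, hh₂⟩, mem_filter.2 ⟨hz, hQ⟩⟩
  rw [Set.ncard_eq_toFinset_card _ (crossingEdgePairs_finite R 0), sq, ← card_product]
  refine (card_le_card hcover).trans (card_biUnion_le_card_mul _ _ _ fun p _ => ?_)
  refine card_le_of_crossers_eq_empty_of_isEdgePairOn fun z hz => ⟨?_, (mem_filter.1 hz).2⟩
  have := (mem_crossingEdgePairs.1 ((Set.Finite.mem_toFinset _).1 (mem_filter.1 hz).1)).2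
  exact card_eq_zero.1 (Nat.le_zero.1 this)

lemma mem_crossingEdgePairs_zero {H R : Finset GPlane} {h₁ h₂ g₁ g₂ : GPlane}
    {z : (Fin 3 → ℝ) × (Fin 3 → ℝ)} (hRH : R ⊆ H) (hR : {h₁, h₂, g₁, g₂} ⊆ R)
    (hz : IsEdgePairOn h₁ h₂ g₁ g₂ z) (hdisj : Disjoint R (crossers H z)) :
    z ∈ crossingEdgePairs R 0 := by
  simp only [insert_subset_iff, singleton_subset_iff] at hR
  refine mem_crossingEdgePairs.2 ⟨⟨h₁, hR.1, h₂, hR.2.1, g₁, hR.2.2.1, g₂, hR.2.2.2, hz⟩, ?_⟩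
  rw [Nat.le_zero, card_eq_zero]
  exact filter_eq_empty_iff.2 fun f hf hcr => disjoint_left.1 hdisj hf (mem_filter.2 ⟨hRH hf, hcr⟩)

lemma card_filter_subset_disjoint_crossers_le {H R : Finset GPlane} (hRH : R ⊆ H)
    {F : Finset ((Fin 3 → ℝ) × (Fin 3 → ℝ))} {h₁ h₂ g₁ g₂ : (Fin 3 → ℝ) × (Fin 3 → ℝ) → GPlane}
    (hF : ∀ z ∈ F, IsEdgePairOn (h₁ z) (h₂ z) (g₁ z) (g₂ z) z) :
    #{z ∈ F | {h₁ z, h₂ z, g₁ z, g₂ z} ⊆ R ∧ Disjoint R (crossers H z)} ≤ 4 * #R ^ 3 := by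
  have hR : #R ^ 2 ≤ #R ^ 3 := by
    rcases (#R).eq_zero_or_pos with h | h
    · simp [h]
    · exact Nat.pow_le_pow_right h (by norm_num)
  calc _ ≤ #(crossingEdgePairs_finite R 0).toFinset := card_le_card fun z hz => by
        obtain ⟨hz, hzR, hdisj⟩ := mem_filter.1 hz
        exact (Set.Finite.mem_toFinset _).2 (mem_crossingEdgePairs_zero hRH hzR (hF z hz) hdisj)
    _ ≤ #R ^ 2 * (3 * #R + 1) := by
        rw [← Set.ncard_eq_toFinset_card _ (crossingEdgePairs_finite R 0)]
        exact ncard_crossingEdgePairs_zero_le R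
    _ ≤ 4 * #R ^ 3 := by nlinarith

theorem ncard_crossingEdgePairs_le (H : Finset GPlane) {q : ℕ} (hq : 1 ≤ q) :
    (crossingEdgePairs H q).ncard ≤ 240 * #H ^ 3 * q := by
  have hdef : ∀ z ∈ crossingEdgePairs H q, ∃ h₁ h₂ g₁ g₂ : GPlane,
      {h₁, h₂, g₁, g₂} ⊆ H ∧ IsEdgePairOn h₁ h₂ g₁ g₂ z := by
    intro z hz
    obtain ⟨⟨h₁, hh₁, h₂, hh₂, g₁, hg₁, g₂, hg₂, hQ⟩, -⟩ := mem_crossingEdgePairs.1 hz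
    exact ⟨h₁, h₂, g₁, g₂, by simp [insert_subset_iff, *], hQ⟩
  choose! h₁ h₂ g₁ g₂ hsub hQ using hdef
  have hfin := crossingEdgePairs_finite H q
  have hmem : ∀ z ∈ hfin.toFinset, z ∈ crossingEdgePairs H q := fun z hz => hfin.mem_toFinset.1 hz
  have hbound := card_le_of_card_conflicts_le (b := 3) (e := 1) (c := 4) (P := hfin.toFinset)
    (D := fun z => {h₁ z, h₂ z, g₁ z, g₂ z}) (K := crossers H) hq
    (fun z hz => ⟨hsub z (hmem z hz), card_le_four⟩)
    (fun z hz => ⟨filter_subset _ _, (mem_crossingEdgePairs.1 (hmem z hz)).2⟩)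
    (fun z hz => disjoint_left.2 fun f hf hfK =>
      (hQ z (hmem z hz)).not_crosses hf (mem_filter.1 hfK).2)
    fun R hR => card_filter_subset_disjoint_crossers_le hR fun z hz => hQ z (hmem z hz)
  rw [Set.ncard_eq_toFinset_card _ hfin]
  norm_num [prod_range_succ] at hbound
  linarith

/-- The number of pairs of edges of `Arr(H)` whose
`xy`-projections cross and whose connecting vertical segment crosses at most
`q` planes of `H` is `O(n³q)`. -/
theorem edge_pairs_with_q_crossings :
    ∃ C : ℝ, 0 < C ∧ ∀ H : Finset GPlane, GenPos H → ∀ q : ℕ, 1 ≤ q →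
      (crossingEdgePairs H q).Finite ∧
      ((crossingEdgePairs H q).ncard : ℝ) ≤ C * (H.card : ℝ) ^ 3 * q :=
  ⟨240, by norm_num, fun H _ q hq =>
    ⟨crossingEdgePairs_finite H q, by exact_mod_cast ncard_crossingEdgePairs_le H hq⟩⟩
end
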